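/- arXiv:2204.01754 — 6 statements merged into one kernel-verified Lean document; each statement's English description precedes it below -/
import Mathlib

section
/- For real numbers 0 < a < b, ∫_a^b ln(x)·√((b−x)(x−a)) dx = (π/16)(a² + 6ab + b² − 4√(ab)(a+b) − 4(a−b)²ln 2 + 2(a−b)²ln(a+b+2√(ab))). -/
/-!
For `x ≥ a > 0`, `log x - log a = ∫₀^∞ ((a + t)⁻¹ - (x + t)⁻¹) dt` with a nonnegative integrand,
so by Tonelli the `x`-integral can be taken first. Against `√((b - x) (x - a))` the two kernels
give `π (b - a)² / 8` and, through an arcsine primitive, `π ((a + b) / 2 + t - √((a + t) (b + t)))`.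
With `v = t + (a + b) / 2` and `d = (b - a) / 2` what remains is
`π ∫_{(a+b)/2}^∞ (d² / (2 (v - d)) - v + √(v² - d²)) dv`, whose integrand has an elementary
primitive tending to `-(d² / 2) log 2 - d² / 4` at infinity.
-/

open MeasureTheory Set Filter Real Topology

theorem hasDerivAt_log_add_sub_log_add {x y t : ℝ} (hy : 0 < y + t) (hx : 0 < x + t) :
    HasDerivAt (fun s => log (y + s) - log (x + s)) ((y + t)⁻¹ - (x + t)⁻¹) t := by
  have hy' : HasDerivAt (fun s => log (y + s)) (y + t)⁻¹ t := by
    simpa using ((hasDerivAt_id t).const_add y).log hy.ne'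
  have hx' : HasDerivAt (fun s => log (x + s)) (x + t)⁻¹ t := by
    simpa using ((hasDerivAt_id t).const_add x).log hx.ne'
  exact hy'.sub hx'

theorem tendsto_log_add_sub_log_add (x y : ℝ) :
    Tendsto (fun t => log (y + t) - log (x + t)) atTop (𝓝 0) := by
  have h := (tendsto_log_comp_add_sub_log (y - x)).comp
    (tendsto_atTop_add_const_left _ x tendsto_id)
  refine h.congr fun t => ?_
  simp only [Function.comp, id]
  ring_nf

theorem inv_add_sub_inv_add_nonneg {x y t : ℝ} (hy : 0 < y + t) (hyx : y ≤ x) :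
    0 ≤ (y + t)⁻¹ - (x + t)⁻¹ :=
  sub_nonneg.2 (inv_anti₀ hy (by linarith))

theorem integrableOn_Ioi_inv_add_sub_inv_add {x y : ℝ} (hy : 0 < y) (hyx : y ≤ x) :
    IntegrableOn (fun t => (y + t)⁻¹ - (x + t)⁻¹) (Ioi 0) :=
  integrableOn_Ioi_deriv_of_nonneg'
    (fun t ht => hasDerivAt_log_add_sub_log_add (by linarith [mem_Ici.1 ht])
      (by linarith [mem_Ici.1 ht]))
    (fun t ht => inv_add_sub_inv_add_nonneg (by linarith [mem_Ioi.1 ht]) hyx)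
    (tendsto_log_add_sub_log_add x y)

theorem integral_Ioi_inv_add_sub_inv_add {x y : ℝ} (hy : 0 < y) (hyx : y ≤ x) :
    ∫ t in Ioi 0, ((y + t)⁻¹ - (x + t)⁻¹) = log x - log y := by
  rw [integral_Ioi_of_hasDerivAt_of_nonneg'
    (fun t ht => hasDerivAt_log_add_sub_log_add (by linarith [mem_Ici.1 ht])
      (by linarith [mem_Ici.1 ht]))
    (fun t ht => inv_add_sub_inv_add_nonneg (by linarith [mem_Ioi.1 ht]) hyx)
    (tendsto_log_add_sub_log_add x y)]
  simp

theorem integral_log_mul_eq_log_mul_add_integral_Ioi {f : ℝ → ℝ} {a b : ℝ} (ha : 0 < a)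
    (hab : a ≤ b) (hf : IntervalIntegrable f volume a b) :
    ∫ x in a..b, log x * f x =
      log a * (∫ x in a..b, f x) + ∫ t in Ioi 0, ∫ x in a..b, f x * ((a + t)⁻¹ - (x + t)⁻¹) := by
  have hfI : IntegrableOn f (Ioc a b) := (intervalIntegrable_iff_integrableOn_Ioc_of_le hab).1 hf
  have hinner : ∀ x ∈ Ioc a b,
      ∫ t in Ioi 0, f x * ((a + t)⁻¹ - (x + t)⁻¹) = f x * (log x - log a) := fun x hx => by
    rw [integral_const_mul, integral_Ioi_inv_add_sub_inv_add ha hx.1.le]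
  have hprod : Integrable (Function.uncurry fun x t => f x * ((a + t)⁻¹ - (x + t)⁻¹))
      ((volume.restrict (Ioc a b)).prod (volume.restrict (Ioi 0))) := by
    refine (integrable_prod_iff ?_).2 ⟨?_, ?_⟩
    · exact hfI.aestronglyMeasurable.comp_fst.mul (Measurable.aestronglyMeasurable (by fun_prop))
    · filter_upwards [ae_restrict_mem measurableSet_Ioc] with x hx
      exact (integrableOn_Ioi_inv_add_sub_inv_add ha hx.1.le).const_mul (f x)
    · have hcont : ContinuousOn (fun x => log x - log a) (Icc a b) :=
        (continuousOn_log.mono fun x hx => (ha.trans_le hx.1).ne').sub continuousOn_const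
      refine (IntegrableOn.mul_continuousOn_of_subset hfI.norm hcont measurableSet_Ioc
        isCompact_Icc Ioc_subset_Icc_self).congr_fun (fun x hx => ?_) measurableSet_Ioc
      calc ‖f x‖ * (log x - log a)
          = ∫ t in Ioi 0, ‖f x‖ * ((a + t)⁻¹ - (x + t)⁻¹) := by
            rw [integral_const_mul, integral_Ioi_inv_add_sub_inv_add ha hx.1.le]
        _ = ∫ t in Ioi 0, ‖f x * ((a + t)⁻¹ - (x + t)⁻¹)‖ :=
            setIntegral_congr_fun measurableSet_Ioi fun t ht => by
              rw [norm_mul, norm_of_nonneg (inv_add_sub_inv_add_nonneg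
                (by linarith [mem_Ioi.1 ht]) hx.1.le)]
  have hsplit : ∀ x ∈ Ioc a b, log x * f x =
      log a * f x + ∫ t in Ioi 0, f x * ((a + t)⁻¹ - (x + t)⁻¹) := fun x hx => by
    rw [hinner x hx]; ring
  have hfubini : IntegrableOn (fun x => ∫ t in Ioi 0, f x * ((a + t)⁻¹ - (x + t)⁻¹)) (Ioc a b) :=
    hprod.integral_prod_left
  simp only [intervalIntegral.integral_of_le hab]
  rw [setIntegral_congr_fun measurableSet_Ioc hsplit,
    integral_add (hfI.const_mul _) hfubini, integral_const_mul,
    integral_integral_swap hprod]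

theorem HasDerivAt.arcsin_of_one_sub_sq_eq {f : ℝ → ℝ} {f' s x : ℝ} (hf : HasDerivAt f f' x)
    (hs : 0 < s) (h : 1 - f x ^ 2 = s ^ 2) : HasDerivAt (fun y => arcsin (f y)) (f' / s) x := by
  have hlt : f x ^ 2 < 1 := by nlinarith
  have hne : f x ≠ -1 ∧ f x ≠ 1 := by
    constructor <;> rintro heq <;> rw [heq] at hlt <;> norm_num at hlt
  refine ((hasDerivAt_arcsin hne.1 hne.2).comp x hf).congr_deriv ?_
  rw [h, sqrt_sq hs.le]
  ring

theorem integral_sqrt_mul_sub_sub {a b : ℝ} (hab : a < b) :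
    ∫ x in a..b, √((b - x) * (x - a)) = π * (b - a) ^ 2 / 8 := by
  have hr : 0 < (b - a) / 2 := by linarith
  have hsub := intervalIntegral.integral_comp_mul_add (a := -1) (b := 1)
    (fun x => √((b - x) * (x - a))) hr.ne' ((a + b) / 2)
  have hlo : (b - a) / 2 * -1 + (a + b) / 2 = a := by ring
  have hhi : (b - a) / 2 * 1 + (a + b) / 2 = b := by ring
  rw [hlo, hhi] at hsub
  have hscale (u : ℝ) :
      √((b - ((b - a) / 2 * u + (a + b) / 2)) * ((b - a) / 2 * u + (a + b) / 2 - a)) =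
        (b - a) / 2 * √(1 - u ^ 2) := by
    rw [show (b - ((b - a) / 2 * u + (a + b) / 2)) * ((b - a) / 2 * u + (a + b) / 2 - a) =
      ((b - a) / 2) ^ 2 * (1 - u ^ 2) by ring, sqrt_mul (sq_nonneg _), sqrt_sq hr.le]
  simp only [hscale, intervalIntegral.integral_const_mul, integral_sqrt_one_sub_sq] at hsub
  rw [eq_inv_smul_iff₀ hr.ne', smul_eq_mul] at hsub
  rw [← hsub]
  ring

theorem hasDerivAt_sqrt_mul_sub_sub_div_primitive {a b x : ℝ} (ha : 0 < a) (hax : a < x)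
    (hxb : x < b) :
    HasDerivAt
      (fun y => √((b - y) * (y - a)) + (a + b) / 2 * arcsin ((2 * y - a - b) / (b - a))
        - √(a * b) * arcsin (((a + b) * y - 2 * a * b) / ((b - a) * y)))
      (√((b - x) * (x - a)) / x) x := by
  have hba : 0 < b - a := by linarith
  have hw0 : 0 < √(a * b) := sqrt_pos.2 (by nlinarith)
  have hw : √(a * b) ^ 2 = a * b := sq_sqrt (by nlinarith)
  have hx : 0 < x := ha.trans hax
  have hQ : 0 < (b - x) * (x - a) := by nlinarith
  have hq := sq_sqrt hQ.le
  have hq0 := sqrt_pos.2 hQ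
  have d1 : HasDerivAt (fun y => √((b - y) * (y - a)))
      (((-1) * (x - a) + (b - x) * 1) / (2 * √((b - x) * (x - a)))) x :=
    (((hasDerivAt_id x).const_sub b).mul ((hasDerivAt_id x).sub_const a)).sqrt hQ.ne'
  have d2 : HasDerivAt (fun y => arcsin ((2 * y - a - b) / (b - a)))
      ((2 / (b - a)) / (2 * √((b - x) * (x - a)) / (b - a))) x := by
    refine HasDerivAt.arcsin_of_one_sub_sq_eq ?_ (by positivity) ?_
    · simpa using
        ((((hasDerivAt_id x).const_mul 2).sub_const a).sub_const b).div_const (b - a)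
    · field_simp
      linear_combination (-4) * hq
  have d3 : HasDerivAt (fun y => arcsin (((a + b) * y - 2 * a * b) / ((b - a) * y)))
      ((2 * a * b * (b - a) / ((b - a) * x) ^ 2) /
        (2 * √(a * b) * √((b - x) * (x - a)) / ((b - a) * x))) x := by
    refine HasDerivAt.arcsin_of_one_sub_sq_eq ?_ (by positivity) ?_
    · refine ((((hasDerivAt_id x).const_mul (a + b)).sub_const (2 * a * b)).div
        ((hasDerivAt_id x).const_mul (b - a)) (by positivity)).congr_deriv ?_
      simp only [id]
      ring
    · field_simp
      linear_combination (-4) * (b - x) * (x - a) * hw - 4 * √(a * b) ^ 2 * hq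
  set q := √((b - x) * (x - a))
  refine ((d1.add (d2.const_mul _)).sub (d3.const_mul _)).congr_deriv ?_
  field_simp
  linear_combination (-2) * hq

theorem integral_sqrt_mul_sub_sub_div {a b : ℝ} (ha : 0 < a) (hab : a < b) :
    ∫ x in a..b, √((b - x) * (x - a)) / x = π * ((a + b) / 2 - √(a * b)) := by
  have hba : 0 < b - a := by linarith
  have hpos : ∀ x ∈ Icc a b, x ≠ 0 := fun x hx => (ha.trans_le hx.1).ne'
  have hcont : ContinuousOn
      (fun y => √((b - y) * (y - a)) + (a + b) / 2 * arcsin ((2 * y - a - b) / (b - a))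
        - √(a * b) * arcsin (((a + b) * y - 2 * a * b) / ((b - a) * y))) (Icc a b) := by
    refine ContinuousOn.sub (Continuous.continuousOn ?_) (continuousOn_const.mul
      (continuous_arcsin.comp_continuousOn (ContinuousOn.div (by fun_prop) (by fun_prop)
        fun x hx => mul_ne_zero hba.ne' (hpos x hx))))
    have := continuous_arcsin
    fun_prop
  have hint : IntervalIntegrable (fun x => √((b - x) * (x - a)) / x) volume a b :=
    (ContinuousOn.div (by fun_prop) continuousOn_id hpos).intervalIntegrable_of_Icc hab.le
  rw [intervalIntegral.integral_eq_sub_of_hasDerivAt_of_le hab.le hcont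
    (fun x hx => hasDerivAt_sqrt_mul_sub_sub_div_primitive ha hx.1 hx.2) hint]
  have e1 : (2 * b - a - b) / (b - a) = 1 := by field_simp; ring
  have e2 : (2 * a - a - b) / (b - a) = -1 := by field_simp; ring
  have e3 : ((a + b) * b - 2 * a * b) / ((b - a) * b) = 1 := by
    rw [div_eq_iff (mul_ne_zero hba.ne' (ha.trans hab).ne')]; ring
  have e4 : ((a + b) * a - 2 * a * b) / ((b - a) * a) = -1 := by
    rw [div_eq_iff (mul_ne_zero hba.ne' ha.ne')]; ring
  simp only [e1, e2, e3, e4, arcsin_one, arcsin_neg_one, sub_self, zero_mul, mul_zero, sqrt_zero]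
  ring

theorem integral_sqrt_mul_sub_sub_div_add {a b t : ℝ} (ha : 0 < a + t) (hab : a < b) :
    ∫ x in a..b, √((b - x) * (x - a)) / (x + t) =
      π * ((a + b) / 2 + t - √((a + t) * (b + t))) := by
  have h := integral_sqrt_mul_sub_sub_div ha (add_lt_add_left hab t)
  rw [← intervalIntegral.integral_comp_add_right] at h
  convert h using 3 <;> ring_nf

theorem integral_sqrt_mul_sub_sub_mul_inv_add_sub_inv_add {a b t : ℝ} (ha : 0 < a + t)
    (hab : a < b) :
    ∫ x in a..b, √((b - x) * (x - a)) * ((a + t)⁻¹ - (x + t)⁻¹) =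
      π * ((b - a) ^ 2 / 8 * (a + t)⁻¹ - ((a + b) / 2 + t) + √((a + t) * (b + t))) := by
  have hQ : Continuous fun x => √((b - x) * (x - a)) := by fun_prop
  have hdiv : IntervalIntegrable (fun x => √((b - x) * (x - a)) / (x + t)) volume a b :=
    (ContinuousOn.div hQ.continuousOn (by fun_prop) fun x hx => by
      linarith [hx.1]).intervalIntegrable_of_Icc hab.le
  have hsplit : (fun x => √((b - x) * (x - a)) * ((a + t)⁻¹ - (x + t)⁻¹)) =
      fun x => √((b - x) * (x - a)) / (a + t) - √((b - x) * (x - a)) / (x + t) := by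
    funext x; ring
  rw [hsplit, intervalIntegral.integral_sub ((hQ.div_const _).intervalIntegrable _ _) hdiv,
    intervalIntegral.integral_div, integral_sqrt_mul_sub_sub hab,
    integral_sqrt_mul_sub_sub_div_add ha hab]
  ring

theorem tendsto_sqrt_sq_sub_sq_div_atTop (d : ℝ) :
    Tendsto (fun v => √(v ^ 2 - d ^ 2) / v) atTop (𝓝 1) := by
  have hu : Tendsto (fun v => d / v) atTop (𝓝 0) := tendsto_const_nhds.div_atTop tendsto_id
  have h := ((tendsto_const_nhds (x := (1 : ℝ))).sub (hu.pow 2)).sqrt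
  rw [zero_pow two_ne_zero, sub_zero, sqrt_one] at h
  refine h.congr' ?_
  filter_upwards [eventually_gt_atTop 0] with v hv
  rw [← sqrt_sq hv.le, ← sqrt_div' _ (sq_nonneg v), sqrt_sq hv.le]
  congr 1
  field_simp

theorem hasDerivAt_sqrt_sq_sub_sq_primitive {d v : ℝ} (hd : 0 ≤ d) (hdv : d < v) :
    HasDerivAt (fun v => d ^ 2 / 2 * (log (v - d) - log (v + √(v ^ 2 - d ^ 2)))
        + v / 2 * (√(v ^ 2 - d ^ 2) - v))
      (d ^ 2 / 2 * (v - d)⁻¹ - v + √(v ^ 2 - d ^ 2)) v := by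
  have hW : 0 < v ^ 2 - d ^ 2 := by nlinarith
  have hs := sqrt_pos.2 hW
  have hs2 := sq_sqrt hW.le
  have dW : HasDerivAt (fun v => √(v ^ 2 - d ^ 2)) (2 * v / (2 * √(v ^ 2 - d ^ 2))) v := by
    simpa using ((hasDerivAt_pow 2 v).sub_const (d ^ 2)).sqrt hW.ne'
  have d1 : HasDerivAt (fun v => log (v - d)) (v - d)⁻¹ v := by
    simpa using ((hasDerivAt_id v).sub_const d).log (sub_pos.2 hdv).ne'
  have d2 : HasDerivAt (fun v => log (v + √(v ^ 2 - d ^ 2)))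
      ((1 + 2 * v / (2 * √(v ^ 2 - d ^ 2))) / (v + √(v ^ 2 - d ^ 2))) v :=
    ((hasDerivAt_id v).add dW).log (by simp only [Pi.add_apply, id]; linarith)
  have d3 : HasDerivAt (fun v => v / 2 * (√(v ^ 2 - d ^ 2) - v))
      (1 / 2 * (√(v ^ 2 - d ^ 2) - v) + v / 2 * (2 * v / (2 * √(v ^ 2 - d ^ 2)) - 1)) v :=
    ((hasDerivAt_id v).div_const 2).mul (dW.sub (hasDerivAt_id v))
  refine (((d1.sub d2).const_mul _).add d3).congr_deriv ?_
  set s := √(v ^ 2 - d ^ 2)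
  have : 0 < v + s := by linarith
  have : v - d ≠ 0 := by linarith
  field_simp
  linear_combination (d * v + d * s - v ^ 2 - s * v) * hs2

theorem tendsto_sqrt_sq_sub_sq_primitive {d : ℝ} (hd : 0 ≤ d) :
    Tendsto (fun v => d ^ 2 / 2 * (log (v - d) - log (v + √(v ^ 2 - d ^ 2)))
      + v / 2 * (√(v ^ 2 - d ^ 2) - v)) atTop (𝓝 (d ^ 2 / 2 * log (1 / 2) - d ^ 2 / 4)) := by
  have hu : Tendsto (fun v => d / v) atTop (𝓝 0) := tendsto_const_nhds.div_atTop tendsto_id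
  have hden : Tendsto (fun v => 1 + √(v ^ 2 - d ^ 2) / v) atTop (𝓝 2) := by
    simpa [one_add_one_eq_two] using (tendsto_sqrt_sq_sub_sq_div_atTop d).const_add 1
  -- with `s = √(v² - d²)`: `v (s - v) / 2 = -(d² / 2) / (1 + s / v)` since `(v - s) (v + s) = d²`
  have h := ((((tendsto_const_nhds.sub hu).div hden two_ne_zero).log
    (by norm_num : (1 - 0) / (2 : ℝ) ≠ 0)).const_mul (d ^ 2 / 2)).add
    ((tendsto_const_nhds (x := -(d ^ 2 / 2))).div hden two_ne_zero)
  rw [sub_zero] at h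
  convert h.congr' ?_ using 2
  · ring
  filter_upwards [eventually_gt_atTop d] with v hv
  have hv0 : 0 < v := hd.trans_lt hv
  have hs2 := sq_sqrt (by nlinarith : 0 ≤ v ^ 2 - d ^ 2)
  have hs0 := sqrt_nonneg (v ^ 2 - d ^ 2)
  have hvs : 0 < v + √(v ^ 2 - d ^ 2) := by linarith
  simp only [Pi.div_apply]
  rw [one_sub_div hv0.ne', one_add_div hv0.ne', div_div_div_cancel_right₀ hv0.ne',
    log_div (by linarith) hvs.ne']
  set s := √(v ^ 2 - d ^ 2)
  field_simp
  linear_combination (-v) * hs2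

theorem integral_Ioi_sqrt_sq_sub_sq {d v₀ : ℝ} (hd : 0 ≤ d) (hdv : d < v₀) :
    ∫ v in Ioi v₀, (d ^ 2 / 2 * (v - d)⁻¹ - v + √(v ^ 2 - d ^ 2)) =
      d ^ 2 / 2 * (log (v₀ + √(v₀ ^ 2 - d ^ 2)) - log (v₀ - d) - log 2) - d ^ 2 / 4
        - v₀ / 2 * (√(v₀ ^ 2 - d ^ 2) - v₀) := by
  have hnonneg : ∀ v ∈ Ioi v₀, 0 ≤ d ^ 2 / 2 * (v - d)⁻¹ - v + √(v ^ 2 - d ^ 2) := by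
    intro v hv
    have hvd : d < v := hdv.trans hv
    have hs2 := sq_sqrt (by nlinarith : 0 ≤ v ^ 2 - d ^ 2)
    have hs0 := sqrt_nonneg (v ^ 2 - d ^ 2)
    set s := √(v ^ 2 - d ^ 2)
    have hsv : s ≤ v := by nlinarith
    have hs : v - 2 * d ≤ s := by nlinarith
    have key : (v - s) * (2 * (v - d)) ≤ d ^ 2 :=
      calc (v - s) * (2 * (v - d)) ≤ (v - s) * (v + s) :=
            mul_le_mul_of_nonneg_left (by linarith) (by linarith)
        _ = d ^ 2 := by linear_combination -hs2
    have := (le_div_iff₀ (by linarith : 0 < 2 * (v - d))).2 key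
    rw [show d ^ 2 / 2 * (v - d)⁻¹ = d ^ 2 / (2 * (v - d)) by field_simp]
    linarith
  rw [integral_Ioi_of_hasDerivAt_of_nonneg'
    (fun v hv => hasDerivAt_sqrt_sq_sub_sq_primitive hd (hdv.trans_le hv)) hnonneg
    (tendsto_sqrt_sq_sub_sq_primitive hd),
    one_div, log_inv]
  ring

theorem integral_Ioi_comp_add_right {E : Type*} [NormedAddCommGroup E] [NormedSpace ℝ E]
    (g : ℝ → E) (c : ℝ) : ∫ t in Ioi 0, g (t + c) = ∫ v in Ioi c, g v := by
  have h := (measurePreserving_add_right volume c).setIntegral_preimage_emb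
    (measurableEmbedding_addRight c) g (Ioi c)
  rwa [preimage_add_const_Ioi, sub_self] at h

theorem stmt1 (a b : ℝ) (h0 : 0 < a) (hab : a < b) :
    ∫ x in a..b, Real.log x * Real.sqrt ((b - x) * (x - a)) =
      Real.pi / 16 * (a ^ 2 + 6 * a * b + b ^ 2 - 4 * Real.sqrt (a * b) * (a + b)
        - 4 * (a - b) ^ 2 * Real.log 2
        + 2 * (a - b) ^ 2 * Real.log (a + b + 2 * Real.sqrt (a * b))) := by
  set d := (b - a) / 2 with hd
  have hinner : ∀ t ∈ Ioi (0 : ℝ),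
      ∫ x in a..b, √((b - x) * (x - a)) * ((a + t)⁻¹ - (x + t)⁻¹) =
        π * (d ^ 2 / 2 * (t + (a + b) / 2 - d)⁻¹ - (t + (a + b) / 2)
          + √((t + (a + b) / 2) ^ 2 - d ^ 2)) := fun t ht => by
    rw [integral_sqrt_mul_sub_sub_mul_inv_add_sub_inv_add (by linarith [mem_Ioi.1 ht]) hab,
      show t + (a + b) / 2 - d = a + t by ring,
      show (t + (a + b) / 2) ^ 2 - d ^ 2 = (a + t) * (b + t) by ring]
    ring
  rw [integral_log_mul_eq_log_mul_add_integral_Ioi h0 hab.le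
      (Continuous.intervalIntegrable (by fun_prop) _ _),
    setIntegral_congr_fun measurableSet_Ioi hinner, integral_const_mul,
    integral_Ioi_comp_add_right (fun v => d ^ 2 / 2 * (v - d)⁻¹ - v + √(v ^ 2 - d ^ 2)),
    integral_Ioi_sqrt_sq_sub_sq (by linarith) (by linarith), integral_sqrt_mul_sub_sub hab,
    show (a + b) / 2 - d = a by ring,
    show ((a + b) / 2) ^ 2 - d ^ 2 = a * b by ring,
    show a + b + 2 * √(a * b) = 2 * ((a + b) / 2 + √(a * b)) by ring,
    log_mul two_ne_zero (by linarith [sqrt_nonneg (a * b)] : 0 < (a + b) / 2 + √(a * b)).ne']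
  ring
end

section
/- For a real number b > 0, ∫_0^b ln(x)·√(x(b−x)) dx = (π/16)(2b²ln(b) − b²(4ln 2 − 1)). -/
/-!
Substituting `x = b sin² θ` turns the integral into
`2 b² ∫₀^{π/2} sin² θ cos² θ (log b + 2 log sin θ) dθ`. The first part is elementary. For the
second, `sin² θ cos² θ = (1 - cos 4θ) / 8` leaves `∫₀^{π/2} log sin θ = -(π/2) log 2` and
`∫₀^{π/2} cos 4θ log sin θ = -π/8`; the latter is integration by parts, written as an explicit
primitive which only involves `sin θ log sin θ` and is therefore continuous at `θ = 0`.
-/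

open Real intervalIntegral Set
open MeasureTheory (volume)

lemma intervalIntegrable_mul_log_sin {f : ℝ → ℝ} (hf : Continuous f) {a b : ℝ} :
    IntervalIntegrable (fun θ => f θ * log (sin θ)) volume a b :=
  intervalIntegrable_log_sin.continuousOn_mul hf.continuousOn

lemma hasDerivAt_cos_four_mul_mul_log_sin_primitive {θ : ℝ} (hθ : sin θ ≠ 0) :
    HasDerivAt
      (fun t => cos t * cos (2 * t) * (sin t * log (sin t)) -
        (sin (2 * t) + t + sin (4 * t) / 4) / 4)
      (cos (4 * θ) * log (sin θ)) θ := by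
  have h2 : HasDerivAt (fun t : ℝ => 2 * t) 2 θ := by simpa using (hasDerivAt_id θ).const_mul 2
  have h4 : HasDerivAt (fun t : ℝ => 4 * t) 4 θ := by simpa using (hasDerivAt_id θ).const_mul 4
  have hF := (((hasDerivAt_cos θ).mul ((hasDerivAt_cos (2 * θ)).comp θ h2)).mul
    ((hasDerivAt_mul_log hθ).comp θ (hasDerivAt_sin θ))).sub
    (((((hasDerivAt_sin (2 * θ)).comp θ h2).add (hasDerivAt_id θ)).add
      (((hasDerivAt_sin (4 * θ)).comp θ h4).div_const 4)).div_const 4)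
  refine hF.congr_deriv ?_
  have h4θ : cos (4 * θ) = 2 * cos (2 * θ) ^ 2 - 1 := by
    rw [show 4 * θ = 2 * (2 * θ) by ring, cos_two_mul]
  simp only [Pi.mul_apply, Function.comp_apply]
  rw [h4θ, sin_two_mul, cos_two_mul]
  linear_combination (1 - 6 * cos θ ^ 2) * log (sin θ) * sin_sq_add_cos_sq θ

lemma integral_cos_four_mul_mul_log_sin :
    ∫ θ in (0:ℝ)..π / 2, cos (4 * θ) * log (sin θ) = -(π / 8) := by
  rw [integral_eq_sub_of_hasDerivAt_of_le (by positivity) (by fun_prop) (fun θ hθ =>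
    hasDerivAt_cos_four_mul_mul_log_sin_primitive
      (sin_pos_of_pos_of_lt_pi hθ.1 (by linarith [hθ.2, pi_pos])).ne')
    (intervalIntegrable_mul_log_sin (by fun_prop))]
  rw [show 2 * (π / 2) = π by ring, show 4 * (π / 2) = 2 * π by ring]
  simp only [mul_zero, cos_zero, cos_pi_div_two, cos_pi, sin_zero, sin_pi, sin_two_pi,
    sin_pi_div_two, log_one]
  ring

lemma sin_sq_mul_cos_sq_eq (θ : ℝ) : sin θ ^ 2 * cos θ ^ 2 = (1 - cos (4 * θ)) / 8 := by
  rw [show 4 * θ = 2 * (2 * θ) by ring, cos_two_mul, cos_sq' (2 * θ), sin_two_mul]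
  ring

lemma integral_sin_sq_mul_cos_sq_mul_log_sin :
    ∫ θ in (0:ℝ)..π / 2, sin θ ^ 2 * cos θ ^ 2 * log (sin θ) =
      π / 64 - π * log 2 / 16 := by
  have hsplit : ∀ θ, sin θ ^ 2 * cos θ ^ 2 * log (sin θ) =
      1 / 8 * log (sin θ) - 1 / 8 * (cos (4 * θ) * log (sin θ)) := fun θ => by
    rw [sin_sq_mul_cos_sq_eq]; ring
  simp_rw [hsplit]
  rw [integral_sub (intervalIntegrable_mul_log_sin continuous_const)
      ((intervalIntegrable_mul_log_sin (by fun_prop)).const_mul _),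
    integral_const_mul, integral_const_mul, integral_log_sin_zero_pi_div_two,
    integral_cos_four_mul_mul_log_sin]
  ring

lemma integral_log_mul_sqrt_mul_sub_eq {b : ℝ} (hb : 0 ≤ b) :
    ∫ x in (0:ℝ)..b, log x * √(x * (b - x)) =
      ∫ θ in (0:ℝ)..π / 2, 2 * b ^ 2 * (sin θ ^ 2 * cos θ ^ 2 * log (b * sin θ ^ 2)) := by
  have hsub := integral_comp_mul_deriv_of_deriv_nonneg (a := 0) (b := π / 2)
    (f := fun θ => b * sin θ ^ 2) (f' := fun θ => b * (2 * sin θ * cos θ))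
    (g := fun x => log x * √(x * (b - x))) (by fun_prop)
    (fun θ _ => by simpa using ((hasDerivAt_sin θ).pow 2).const_mul b)
    (fun θ hθ => by
      rw [min_eq_left (by positivity), max_eq_right (by positivity)] at hθ
      have := sin_nonneg_of_nonneg_of_le_pi hθ.1.le (by linarith [hθ.2, pi_pos])
      have := cos_nonneg_of_mem_Icc ⟨by linarith [hθ.1, pi_pos], hθ.2.le⟩
      positivity)
  simp only [sin_zero, sin_pi_div_two, Function.comp_apply, ne_eq, OfNat.ofNat_ne_zero,
    not_false_eq_true, zero_pow, mul_zero, one_pow, mul_one] at hsub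
  rw [← hsub]
  refine integral_congr fun θ hθ => ?_
  rw [uIcc_of_le (by positivity)] at hθ
  have hs := sin_nonneg_of_nonneg_of_le_pi hθ.1 (by linarith [hθ.2, pi_pos])
  have hc := cos_nonneg_of_mem_Icc ⟨by linarith [hθ.1, pi_pos], hθ.2⟩
  have hsqrt : √(b * sin θ ^ 2 * (b - b * sin θ ^ 2)) = b * sin θ * cos θ := by
    rw [← sqrt_sq (by positivity : 0 ≤ b * sin θ * cos θ)]
    congr 1
    linear_combination -b ^ 2 * sin θ ^ 2 * sin_sq_add_cos_sq θ
  rw [hsqrt]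
  ring

lemma sin_sq_mul_cos_sq_mul_log_mul_sin_sq {b : ℝ} (hb : b ≠ 0) (θ : ℝ) :
    sin θ ^ 2 * cos θ ^ 2 * log (b * sin θ ^ 2) =
      log b * (sin θ ^ 2 * cos θ ^ 2) + 2 * (sin θ ^ 2 * cos θ ^ 2 * log (sin θ)) := by
  rcases eq_or_ne (sin θ) 0 with hs | hs
  · simp [hs]
  · rw [log_mul hb (by positivity), log_pow]
    push_cast
    ring

theorem stmt2 (b : ℝ) (hb : 0 < b) :
    ∫ x in (0:ℝ)..b, Real.log x * Real.sqrt (x * (b - x)) =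
      Real.pi / 16 * (2 * b ^ 2 * Real.log b - b ^ 2 * (4 * Real.log 2 - 1)) := by
  rw [integral_log_mul_sqrt_mul_sub_eq hb.le]
  simp_rw [sin_sq_mul_cos_sq_mul_log_mul_sin_sq hb.ne']
  rw [integral_const_mul, integral_add ((by fun_prop : Continuous _).intervalIntegrable _ _)
      ((intervalIntegrable_mul_log_sin (by fun_prop)).const_mul _),
    integral_const_mul, integral_const_mul, integral_sin_sq_mul_cos_sq,
    integral_sin_sq_mul_cos_sq_mul_log_sin, show 4 * (π / 2) = 2 * π by ring]
  simp only [mul_zero, sin_zero, sin_two_pi, sub_zero]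
  ring
end

section
/- For any real t > 0 and natural number d ≥ 1, ∫_0^t x^(d−1)·√((t−x)x) dx = (π/2) t^(d+1) · C_d / 4^d, where C_d = (2d choose d)/(d+1) is the d-th Catalan number. -/
lemma gamma_nat_add_half (d : ℕ) :
    Real.Gamma ((d : ℝ) + 1 / 2) = (2 * d).factorial * Real.sqrt Real.pi /
      (4 ^ d * d.factorial) := by
  induction d with
  | zero => simpa using Real.Gamma_one_half_eq
  | succ n ih =>
    have h : ((n : ℝ) + 1 + 1 / 2) = ((n : ℝ) + 1 / 2) + 1 := by ring
    rw [Nat.cast_add, Nat.cast_one, h, Real.Gamma_add_one (by positivity), ih]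
    have h2 : (2 * (n + 1)).factorial = (2 * n + 2) * ((2 * n + 1) * (2 * n).factorial) := by
      have : 2 * (n + 1) = (2 * n + 1) + 1 := by ring
      rw [this, Nat.factorial_succ, Nat.factorial_succ]
    rw [h2, Nat.factorial_succ]
    push_cast
    have hfn : (n.factorial : ℝ) ≠ 0 := Nat.cast_ne_zero.mpr n.factorial_ne_zero
    field_simp
    ring

theorem stmt6 (t : ℝ) (ht : 0 < t) (d : ℕ) (hd : 1 ≤ d) :
    ∫ x in (0:ℝ)..t, x ^ (d - 1) * Real.sqrt ((t - x) * x) =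
      Real.pi / 2 * t ^ (d + 1) * (catalan d : ℝ) / 4 ^ d := by
  -- rewrite the integrand with rpow
  set f : ℝ → ℝ := fun x => x ^ ((d : ℝ) - 1 / 2) * Real.sqrt (t - x) with hf
  have hI : (∫ x in (0:ℝ)..t, x ^ (d - 1) * Real.sqrt ((t - x) * x)) =
      ∫ x in (0:ℝ)..t, f x := by
    refine intervalIntegral.integral_congr fun x hx => ?_
    rw [Set.uIcc_of_le ht.le] at hx
    obtain ⟨hx0, hxt⟩ := hx
    rcases eq_or_lt_of_le hx0 with h0 | h0
    · simp only [hf, ← h0]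
      have hne : (d : ℝ) - 1 / 2 ≠ 0 := by
        have : (1 : ℝ) ≤ (d : ℝ) := by exact_mod_cast hd
        intro h; linarith
      rw [Real.zero_rpow hne, mul_zero, zero_mul, Real.sqrt_zero, mul_zero]
    · have hsq : Real.sqrt ((t - x) * x) = Real.sqrt (t - x) * Real.sqrt x :=
        Real.sqrt_mul (by linarith) x
      have hpow : x ^ (d - 1) * Real.sqrt x = x ^ ((d : ℝ) - 1 / 2) := by
        rw [Real.sqrt_eq_rpow, ← Real.rpow_natCast x (d - 1),
          ← Real.rpow_add h0]
        congr 1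
        have : ((d - 1 : ℕ) : ℝ) = (d : ℝ) - 1 := by
          have := Nat.cast_sub hd (R := ℝ); simpa using this
        rw [this]; ring
      rw [hsq, hf]
      dsimp only
      rw [← hpow]; ring
  rw [hI]
  -- complex Beta evaluation
  have hbeta := Complex.betaIntegral_scaled ((d : ℂ) + 1 / 2) (3 / 2) ht
  have hcongr : (∫ x in (0:ℝ)..t,
      (x : ℂ) ^ ((d : ℂ) + 1 / 2 - 1) * ((t : ℂ) - x) ^ ((3 / 2 : ℂ) - 1)) =
      ∫ x in (0:ℝ)..t, ((f x : ℝ) : ℂ) := by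
    refine intervalIntegral.integral_congr fun x hx => ?_
    rw [Set.uIcc_of_le ht.le] at hx
    obtain ⟨hx0, hxt⟩ := hx
    have h1 : (x : ℂ) ^ ((d : ℂ) + 1 / 2 - 1) = ((x ^ ((d : ℝ) - 1 / 2) : ℝ) : ℂ) := by
      rw [Complex.ofReal_cpow hx0]
      congr 1
      push_cast; ring
    have h2 : ((t : ℂ) - x) ^ ((3 / 2 : ℂ) - 1) = ((Real.sqrt (t - x) : ℝ) : ℂ) := by
      rw [Real.sqrt_eq_rpow, Complex.ofReal_cpow (by linarith)]
      push_cast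
      norm_num
    rw [h1, h2, hf]
    push_cast
    ring
  rw [hcongr, intervalIntegral.integral_ofReal] at hbeta
  -- evaluate the Beta function
  have hs : 0 < ((d : ℂ) + 1 / 2).re := by
    simp only [Complex.add_re, Complex.natCast_re]
    norm_num
    positivity
  have ht' : 0 < ((3 / 2 : ℂ)).re := by norm_num
  have hGamma := Complex.Gamma_mul_Gamma_eq_betaIntegral hs ht'
  have hsum : (d : ℂ) + 1 / 2 + 3 / 2 = ((d + 1 : ℕ) : ℂ) + 1 := by push_cast; ring
  rw [hsum, Complex.Gamma_nat_eq_factorial] at hGamma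
  have hfac_ne : ((d + 1).factorial : ℂ) ≠ 0 := Nat.cast_ne_zero.mpr (d + 1).factorial_ne_zero
  have hbetaval : Complex.betaIntegral ((d : ℂ) + 1 / 2) (3 / 2) =
      Complex.Gamma ((d : ℂ) + 1 / 2) * Complex.Gamma (3 / 2) / ((d + 1).factorial : ℂ) := by
    rw [eq_div_iff hfac_ne]
    linear_combination -hGamma
  -- rewrite Gammas via real Gamma
  have hG1 : Complex.Gamma ((d : ℂ) + 1 / 2) = ((Real.Gamma ((d : ℝ) + 1 / 2) : ℝ) : ℂ) := by
    rw [← Complex.Gamma_ofReal]; push_cast; ring_nf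
  have hG2 : Complex.Gamma ((3 / 2 : ℂ)) = ((Real.Gamma (3 / 2) : ℝ) : ℂ) := by
    rw [← Complex.Gamma_ofReal]; norm_num
  have hG2val : Real.Gamma (3 / 2) = Real.sqrt Real.pi / 2 := by
    have : (3 / 2 : ℝ) = 1 / 2 + 1 := by norm_num
    rw [this, Real.Gamma_add_one (by norm_num), Real.Gamma_one_half_eq]
    ring
  have hexp : ((t : ℂ)) ^ ((d : ℂ) + 1 / 2 + 3 / 2 - 1) = (((t ^ (d + 1) : ℝ)) : ℂ) := by
    have : (d : ℂ) + 1 / 2 + 3 / 2 - 1 = ((d + 1 : ℕ) : ℂ) := by push_cast; ring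
    rw [this, Complex.cpow_natCast]
    push_cast
    ring
  rw [hbetaval, hG1, hG2, hG2val, hexp] at hbeta
  -- back to reals
  have hreal : (∫ x in (0:ℝ)..t, f x) =
      t ^ (d + 1) * (Real.Gamma ((d : ℝ) + 1 / 2) * (Real.sqrt Real.pi / 2) /
        ((d + 1).factorial : ℝ)) := by
    have := hbeta
    rw [show (((d+1).factorial : ℂ)) = (((((d+1).factorial : ℝ)) : ℂ)) by push_cast; ring] at this
    rw [← Complex.ofReal_mul, ← Complex.ofReal_div, ← Complex.ofReal_mul] at this
    exact_mod_cast this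
  rw [hreal, gamma_nat_add_half]
  -- final arithmetic with Catalan numbers
  have hcat : ((2 * d).factorial : ℝ) = (d + 1) * catalan d * d.factorial * d.factorial := by
    have h1 : (d + 1) * catalan d = d.centralBinom := succ_mul_catalan_eq_centralBinom d
    have h2 : d.centralBinom * (d.factorial * d.factorial) = (2 * d).factorial := by
      rw [Nat.centralBinom]
      have := Nat.choose_mul_factorial_mul_factorial (n := 2 * d) (k := d)
        (by omega)
      rw [show 2 * d - d = d by omega] at this
      rw [← this]; ring
    rw [← h2, ← h1]
    push_cast
    ring
  have hsq : Real.sqrt Real.pi * Real.sqrt Real.pi = Real.pi :=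
    Real.mul_self_sqrt Real.pi_pos.le
  rw [hcat, Nat.factorial_succ]
  have hfd : (d.factorial : ℝ) ≠ 0 := Nat.cast_ne_zero.mpr d.factorial_ne_zero
  have h4 : (4 : ℝ) ^ d ≠ 0 := by positivity
  have hd1 : ((d : ℝ) + 1) ≠ 0 := by positivity
  push_cast
  field_simp
  linear_combination (catalan d : ℝ) * hsq
end

section
/- Let α, β be positive reals with α ≤ β, λ = α/β, σ₀² = 1/α, and λ± = σ₀²(1 ± √λ)². Then (α/(2πσ₀²λ)) ∫_{λ₋}^{λ₊} (−ln x)·√((λ₊−x)(x−λ₋)) dx = ln(α) − α/(2β). -/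
/-!
Substituting `x = c - r cos θ`, with `c ± r` the edges of the Marchenko–Pastur support, turns the
integral into `(2 / π) ∫₀^π -log (c - r cos θ) sin² θ dθ`, and `c - r cos θ = α⁻¹ |1 - s e^{iθ}|²`
with `s = √(α / β)`. Since `-log |1 - s e^{iθ}|² = 2 ∑ sⁿ cos (n θ) / n` and `sin² θ` is
orthogonal on `[0, π]` to every `cos (n θ)` with `n ≥ 1` except `n = 2`, one gets
`∫₀^π log (1 - 2 s cos θ + s²) sin² θ dθ = π s² / 4` for `|s| < 1`; the edge case `s = 1`
(`α = β`, where the support touches `0`) follows by dominated convergence.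
-/

open Real MeasureTheory Filter Set Topology Interval

theorem integral_mul_sqrt_sub_mul_sub (g : ℝ → ℝ) {c r : ℝ} (hr : 0 ≤ r) :
    ∫ x in c - r..c + r, g x * √((c + r - x) * (x - (c - r))) =
      r ^ 2 * ∫ θ in 0..π, g (c - r * cos θ) * sin θ ^ 2 := by
  have hsub := integral_Icc_deriv_smul_of_deriv_nonneg
    (f := fun θ => c - r * cos θ) (f' := fun θ => r * sin θ)
    (g := fun x => g x * √((c + r - x) * (x - (c - r)))) (a := 0) (b := π)
    (by fun_prop)
    (fun θ _ => by simpa using ((hasDerivAt_cos θ).const_mul r).const_sub c)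
    (fun θ hθ => mul_nonneg hr (sin_nonneg_of_nonneg_of_le_pi hθ.1.le hθ.2.le)) pi_pos.le
  simp only [cos_zero, cos_pi, mul_one, mul_neg, sub_neg_eq_add] at hsub
  rw [intervalIntegral.integral_of_le (by linarith), intervalIntegral.integral_of_le pi_pos.le,
    ← integral_Icc_eq_integral_Ioc, ← integral_Icc_eq_integral_Ioc, ← hsub,
    ← MeasureTheory.integral_const_mul]
  refine setIntegral_congr_fun measurableSet_Icc fun θ hθ => ?_
  have hsin : 0 ≤ sin θ := sin_nonneg_of_nonneg_of_le_pi hθ.1 hθ.2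
  have hprod : (c + r - (c - r * cos θ)) * (c - r * cos θ - (c - r)) = (r * sin θ) ^ 2 := by
    linear_combination -r ^ 2 * sin_sq_add_cos_sq θ
  simp only [smul_eq_mul, hprod, sqrt_sq (mul_nonneg hr hsin)]
  ring

theorem integral_cos_int_mul_zero_pi (k : ℤ) :
    ∫ θ in 0..π, cos (k * θ) = if k = 0 then π else 0 := by
  split_ifs with hk
  · simp [hk]
  · have hk' : (k : ℝ) ≠ 0 := Int.cast_ne_zero.mpr hk
    rw [intervalIntegral.integral_comp_mul_left (fun x => cos x) hk', integral_cos]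
    simp [sin_int_mul_pi]

theorem integral_cos_nat_mul_mul_sin_sq {n : ℕ} (hn : n ≠ 0) :
    ∫ θ in 0..π, cos (n * θ) * sin θ ^ 2 = if n = 2 then -(π / 4) else 0 := by
  have hprod : ∀ θ, cos (n * θ) * sin θ ^ 2 = cos ((n : ℤ) * θ) / 2
      - cos (((n + 2 : ℤ) : ℝ) * θ) / 4 - cos (((n - 2 : ℤ) : ℝ) * θ) / 4 := fun θ => by
    push_cast
    rw [add_mul, sub_mul, cos_add, cos_sub, cos_two_mul, sin_two_mul]
    linear_combination cos (n * θ) * sin_sq_add_cos_sq θ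
  have hint : ∀ k : ℤ, IntervalIntegrable (fun θ => cos (k * θ)) volume 0 π := fun k =>
    (by fun_prop : Continuous fun θ : ℝ => cos (k * θ)).intervalIntegrable _ _
  simp_rw [hprod]
  rw [intervalIntegral.integral_sub (((hint _).div_const _).sub ((hint _).div_const _))
      ((hint _).div_const _),
    intervalIntegral.integral_sub ((hint _).div_const _) ((hint _).div_const _),
    intervalIntegral.integral_div, intervalIntegral.integral_div, intervalIntegral.integral_div,
    integral_cos_int_mul_zero_pi, integral_cos_int_mul_zero_pi, integral_cos_int_mul_zero_pi]
  split_ifs <;> first | omega | ring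

theorem cos_lt_one_of_mem_uIoc {θ : ℝ} (hθ : θ ∈ Ι 0 π) : cos θ < 1 := by
  rw [uIoc_of_le pi_pos.le] at hθ
  simpa using cos_lt_cos_of_nonneg_of_le_pi le_rfl hθ.2 hθ.1

/-- The `n = 0` term vanishes because `x / 0 = 0`. -/
theorem hasSum_pow_mul_cos_div {q : ℝ} (hq : |q| < 1) (θ : ℝ) :
    HasSum (fun n : ℕ => q ^ n * cos (n * θ) / n) (-(log (1 - 2 * q * cos θ + q ^ 2) / 2)) := by
  set z : ℂ := q * Complex.exp (θ * Complex.I)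
  have hz : ‖z‖ < 1 := by simpa [z] using hq
  have hzn (n : ℕ) : (z ^ n / n).re = q ^ n * cos (n * θ) / n := by
    have : z ^ n / n = ((q ^ n / n : ℝ) : ℂ) * Complex.exp ((n * θ : ℝ) * Complex.I) := by
      rw [mul_pow, ← Complex.exp_nat_mul]
      push_cast
      ring_nf
    rw [this, Complex.re_ofReal_mul, Complex.exp_ofReal_mul_I_re]
    ring
  have hnormSq : Complex.normSq (1 - z) = 1 - 2 * q * cos θ + q ^ 2 := by
    rw [Complex.normSq_apply]
    simp only [z, Complex.sub_re, Complex.sub_im, Complex.one_re, Complex.one_im,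
      Complex.re_ofReal_mul, Complex.im_ofReal_mul, Complex.exp_ofReal_mul_I_re,
      Complex.exp_ofReal_mul_I_im]
    linear_combination q ^ 2 * sin_sq_add_cos_sq θ
  have hlog : (-Complex.log (1 - z)).re = -(log (1 - 2 * q * cos θ + q ^ 2) / 2) := by
    rw [Complex.neg_re, Complex.log_re, Complex.norm_def, hnormSq,
      log_sqrt (hnormSq ▸ Complex.normSq_nonneg _)]
  simpa only [hzn, hlog] using Complex.hasSum_re (Complex.hasSum_taylorSeries_neg_log hz)

theorem integral_log_one_sub_two_mul_cos_add_sq_mul_sin_sq_of_abs_lt {q : ℝ} (hq : |q| < 1) :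
    ∫ θ in 0..π, log (1 - 2 * q * cos θ + q ^ 2) * sin θ ^ 2 = π * q ^ 2 / 4 := by
  have hterm (n : ℕ) (θ : ℝ) : ‖q ^ n * cos (n * θ) / n * sin θ ^ 2‖ ≤ |q| ^ n := by
    obtain rfl | hn := Nat.eq_zero_or_pos n
    · simp
    have hn' : (1 : ℝ) ≤ n := by exact_mod_cast hn
    rw [norm_mul, norm_div, norm_mul, norm_pow, Real.norm_natCast, norm_pow]
    calc _ ≤ ‖q‖ ^ n * 1 / 1 * 1 ^ 2 := by gcongr <;> simp [abs_cos_le_one, abs_sin_le_one]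
      _ = |q| ^ n := by simp
  have hsum := intervalIntegral.hasSum_integral_of_dominated_convergence (μ := volume)
    (F := fun (n : ℕ) θ => q ^ n * cos (n * θ) / n * sin θ ^ 2)
    (f := fun θ => -(log (1 - 2 * q * cos θ + q ^ 2) / 2) * sin θ ^ 2) (a := 0) (b := π)
    (fun n _ => |q| ^ n) (fun n => by fun_prop) (fun n => ae_of_all _ fun θ _ => hterm n θ)
    (ae_of_all _ fun _ _ => summable_geometric_of_lt_one (abs_nonneg q) hq)
    intervalIntegrable_const
    (ae_of_all _ fun θ _ => (hasSum_pow_mul_cos_div hq θ).mul_right _)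
  have hcoeff (n : ℕ) : ∫ θ in 0..π, q ^ n * cos (n * θ) / n * sin θ ^ 2 =
      if n = 2 then -(π * q ^ 2 / 8) else 0 := by
    obtain rfl | hn := eq_or_ne n 0
    · simp
    have hrw (θ : ℝ) :
        q ^ n * cos (n * θ) / n * sin θ ^ 2 = q ^ n / n * (cos (n * θ) * sin θ ^ 2) := by
      ring
    simp_rw [hrw, intervalIntegral.integral_const_mul, integral_cos_nat_mul_mul_sin_sq hn]
    split_ifs with h2
    · subst h2; ring
    · simp
  simp only [hcoeff] at hsum
  have hhalf := hsum.unique (hasSum_ite_eq 2 _)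
  have hneg : ∫ θ in 0..π, -(log (1 - 2 * q * cos θ + q ^ 2) / 2) * sin θ ^ 2 =
      -((∫ θ in 0..π, log (1 - 2 * q * cos θ + q ^ 2) * sin θ ^ 2) / 2) := by
    rw [← intervalIntegral.integral_div, ← intervalIntegral.integral_neg]
    congr 1 with θ
    ring
  linarith

theorem abs_log_one_sub_two_mul_cos_add_sq_mul_sin_sq_le {s : ℝ} (hs : 0 < s) (θ : ℝ) :
    |log (1 - 2 * s * cos θ + s ^ 2) * sin θ ^ 2| ≤ (1 + s) ^ 2 + s⁻¹ := by
  set D := 1 - 2 * s * cos θ + s ^ 2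
  have hsin : sin θ ^ 2 ≤ 1 := sin_sq_le_one θ
  have hsin₀ : 0 ≤ sin θ ^ 2 := sq_nonneg _
  have hcos : -1 ≤ cos θ := neg_one_le_cos θ
  -- `D - s sin² θ = s (1 - cos θ) ^ 2 + (1 - s) ^ 2`
  have hD : s * sin θ ^ 2 ≤ D := by
    nlinarith [sin_sq_add_cos_sq θ, sq_nonneg (1 - s), mul_nonneg hs.le (sq_nonneg (1 - cos θ))]
  have hD₀ : 0 ≤ D := (mul_nonneg hs.le hsin₀).trans hD
  have hupper : log D * sin θ ^ 2 ≤ (1 + s) ^ 2 :=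
    calc log D * sin θ ^ 2 ≤ (1 + s) ^ 2 * sin θ ^ 2 := by
          gcongr
          exact (log_le_self hD₀).trans (by nlinarith)
      _ ≤ (1 + s) ^ 2 := by nlinarith
  have hlower : -s⁻¹ ≤ log D * sin θ ^ 2 := by
    have : D⁻¹ * sin θ ^ 2 ≤ s⁻¹ := by
      rcases hD₀.eq_or_lt with hD0 | hDpos
      · simp [← hD0, hs.le]
      · rw [inv_mul_le_iff₀ hDpos, ← div_eq_mul_inv, le_div_iff₀ hs]
        linarith
    nlinarith [neg_inv_le_log hD₀]
  rw [abs_le]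
  constructor <;> nlinarith [sq_nonneg (1 + s), inv_pos.mpr hs]

theorem intervalIntegrable_log_one_sub_two_mul_cos_add_sq_mul_sin_sq {s : ℝ} (hs : 0 < s)
    (a b : ℝ) :
    IntervalIntegrable (fun θ => log (1 - 2 * s * cos θ + s ^ 2) * sin θ ^ 2) volume a b :=
  intervalIntegrable_const.mono_fun' (by fun_prop)
    (ae_of_all _ fun θ => abs_log_one_sub_two_mul_cos_add_sq_mul_sin_sq_le hs θ)

theorem integral_log_one_sub_two_mul_cos_add_sq_mul_sin_sq {s : ℝ} (hs₀ : 0 ≤ s)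
    (hs₁ : s ≤ 1) :
    ∫ θ in 0..π, log (1 - 2 * s * cos θ + s ^ 2) * sin θ ^ 2 = π * s ^ 2 / 4 := by
  rcases hs₁.lt_or_eq with hs₁ | rfl
  · exact integral_log_one_sub_two_mul_cos_add_sq_mul_sin_sq_of_abs_lt
      (abs_lt.mpr ⟨by linarith, hs₁⟩)
  have hnear : ∀ᶠ q in 𝓝[<] (1 : ℝ), q ∈ Ioo (1 / 2) 1 := Ioo_mem_nhdsLT (by norm_num)
  have hlim : Tendsto (fun q => ∫ θ in 0..π, log (1 - 2 * q * cos θ + q ^ 2) * sin θ ^ 2)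
      (𝓝[<] 1) (𝓝 (∫ θ in 0..π, log (1 - 2 * 1 * cos θ + 1 ^ 2) * sin θ ^ 2)) := by
    refine intervalIntegral.tendsto_integral_filter_of_dominated_convergence (fun _ => 6)
      (.of_forall fun q => by fun_prop) ?_ intervalIntegrable_const ?_
    · filter_upwards [hnear] with q ⟨hq₀, hq₁⟩
      refine ae_of_all _ fun θ _ => ?_
      have hinv : q⁻¹ ≤ 2 := by
        rw [inv_le_comm₀ (by linarith) two_pos]
        linarith
      have := abs_log_one_sub_two_mul_cos_add_sq_mul_sin_sq_le (hq₀.trans' (by norm_num)) θ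
      rw [Real.norm_eq_abs]
      nlinarith
    · refine ae_of_all _ fun θ hθ => ?_
      have hcos := cos_lt_one_of_mem_uIoc hθ
      refine (ContinuousAt.tendsto ?_).mono_left nhdsWithin_le_nhds
      exact ((continuousAt_id.log (by simp; linarith)).comp (by fun_prop)).mul
        continuousAt_const
  refine tendsto_nhds_unique hlim (Tendsto.congr' (f₁ := fun q => π * q ^ 2 / 4) ?_ ?_)
  · filter_upwards [hnear] with q ⟨hq₀, hq₁⟩
    exact (integral_log_one_sub_two_mul_cos_add_sq_mul_sin_sq_of_abs_lt
      (abs_lt.mpr ⟨by linarith, hq₁⟩)).symm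
  · exact ((by fun_prop : Continuous fun q : ℝ => π * q ^ 2 / 4).tendsto 1).mono_left
      nhdsWithin_le_nhds

theorem integral_neg_log_affine_cos_mul_sin_sq {A s : ℝ} (hA : 0 < A) (hs₀ : 0 < s)
    (hs₁ : s ≤ 1) :
    ∫ θ in 0..π, -log (A * (1 + s ^ 2) - 2 * A * s * cos θ) * sin θ ^ 2 =
      -(π / 2 * log A) - π * s ^ 2 / 4 := by
  have hsplit : ∀ᵐ θ, θ ∈ Ι 0 π → -log (A * (1 + s ^ 2) - 2 * A * s * cos θ) * sin θ ^ 2 =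
      -log A * sin θ ^ 2 - log (1 - 2 * s * cos θ + s ^ 2) * sin θ ^ 2 := by
    refine ae_of_all _ fun θ hθ => ?_
    have hcos := cos_lt_one_of_mem_uIoc hθ
    have hD : 0 < 1 - 2 * s * cos θ + s ^ 2 := by nlinarith [sq_nonneg (1 - s)]
    rw [show A * (1 + s ^ 2) - 2 * A * s * cos θ = A * (1 - 2 * s * cos θ + s ^ 2) by ring,
      log_mul hA.ne' hD.ne']
    ring
  rw [intervalIntegral.integral_congr_ae hsplit, intervalIntegral.integral_sub
    ((by fun_prop : Continuous fun θ => -log A * sin θ ^ 2).intervalIntegrable _ _)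
    (intervalIntegrable_log_one_sub_two_mul_cos_add_sq_mul_sin_sq hs₀ 0 π),
    intervalIntegral.integral_const_mul, integral_sin_sq,
    integral_log_one_sub_two_mul_cos_add_sq_mul_sin_sq hs₀.le hs₁]
  simp
  ring

theorem stmt8 (α β lm lp : ℝ) (hα : 1 ≤ α) (hαβ : α ≤ β)
    (hlm : lm = (1 / α) * (1 - Real.sqrt (α / β)) ^ 2)
    (hlp : lp = (1 / α) * (1 + Real.sqrt (α / β)) ^ 2) :
    α / (2 * Real.pi * (1 / α) * (α / β)) *
      ∫ x in lm..lp, (-Real.log x) * Real.sqrt ((lp - x) * (x - lm)) =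
      Real.log α - α / (2 * β) := by
  have hα₀ : 0 < α := by linarith
  have hβ₀ : 0 < β := by linarith
  set s := √(α / β)
  have hs₀ : 0 < s := sqrt_pos.mpr (by positivity)
  have hs₁ : s ≤ 1 := sqrt_le_one.mpr ((div_le_one hβ₀).mpr hαβ)
  have hs_sq : s ^ 2 = α / β := sq_sqrt (by positivity)
  have hlm' : lm = (1 / α) * (1 + s ^ 2) - 2 * (1 / α) * s := by rw [hlm]; ring
  have hlp' : lp = (1 / α) * (1 + s ^ 2) + 2 * (1 / α) * s := by rw [hlp]; ring
  rw [hlm', hlp', integral_mul_sqrt_sub_mul_sub (fun x => -log x) (by positivity),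
    integral_neg_log_affine_cos_mul_sin_sq (by positivity) hs₀ hs₁, one_div, log_inv,
    show α / (2 * β) = α / β / 2 by ring, ← hs_sq]
  field_simp
  ring
end

section
/- Let α, β ≥ 1 be reals, λ₀ ∈ [0,1), σ_γ² = (1−λ₀)/α, λ = α/β ≤ 1, λ± = σ_γ²(1 ± √λ)². Define E_{λ₀} = (α/(2πσ_γ²λ)) ∫_{λ₋}^{λ₊} (−ln x)√((λ₊−x)(x−λ₋)) dx − λ₀ ln λ₀ (with λ₀ ln λ₀ := 0 when λ₀ = 0). Then E_{λ₀} = (1/(4αβ))[ −4αβλ₀ln λ₀ + (8αβ ln 2 − α² − β²)(1−λ₀) − 4αβ(1−λ₀)ln(−2((α+β)λ₀ − (β−α)(1−λ₀) − α − β)/(αβ)) + (α+β)(β−α)(1−λ₀) ]. -/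
/-!
Substituting `x = σ (1 + k² + 2 k sin θ)`, with `σ = σ_γ²` and `k = √(α / β) ≤ 1`, turns the
integral into `-4 σ² k² ∫_{-π/2}^{π/2} cos² θ (log σ + log (1 + k² + 2 k sin θ)) dθ`. The last
integral equals `π k² / 4`: for `|k| < 1` its `k`-derivative is `π k / 2`, computed from an explicit
primitive in `θ`, and the endpoint `k = 1` (where the logarithm is singular) is reached by
continuity in `k`, which holds because `cos² θ ≤ (k + sin θ)² + cos² θ = 1 + k² + 2 k sin θ`.
-/

open Real Set Filter Topology MeasureTheory intervalIntegral

theorem continuous_mul_log_of_le {X : Type*} [TopologicalSpace X] {c d : X → ℝ}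
    (hc : Continuous c) (hd : Continuous d) (hc0 : ∀ x, 0 ≤ c x) (hcd : ∀ x, c x ≤ d x) :
    Continuous fun x => c x * log (d x) := by
  refine continuous_iff_continuousAt.2 fun x => ?_
  by_cases hx : d x = 0
  · have hcx : c x = 0 := le_antisymm (hx ▸ hcd x) (hc0 x)
    have hdlog : Tendsto (fun y => d y * log (d y)) (𝓝 x) (𝓝 0) := by
      simpa [hx, Function.comp_def] using (continuous_mul_log.comp hd).tendsto x
    rw [ContinuousAt, hcx, zero_mul]
    refine squeeze_zero_norm (fun y => ?_) (by simpa using hdlog.norm)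
    rw [norm_mul, norm_of_nonneg (hc0 y), norm_eq_abs, abs_of_nonneg ((hc0 y).trans (hcd y))]
    exact mul_le_mul_of_nonneg_right (hcd y) (abs_nonneg _)
  · exact hc.continuousAt.mul ((continuousAt_log hx).comp hd.continuousAt)

theorem one_add_sq_add_two_mul_sin (k θ : ℝ) :
    1 + k ^ 2 + 2 * k * sin θ = (k + sin θ) ^ 2 + cos θ ^ 2 := by
  linear_combination -sin_sq_add_cos_sq θ

theorem neg_mul_sin_le_abs (k θ : ℝ) : -(k * sin θ) ≤ |k| :=
  (neg_le_abs _).trans <| by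
    rw [abs_mul]; exact mul_le_of_le_one_right (abs_nonneg k) (abs_sin_le_one θ)

theorem one_add_sq_add_two_mul_sin_pos {k : ℝ} (hk : |k| < 1) (θ : ℝ) :
    0 < 1 + k ^ 2 + 2 * k * sin θ := by
  nlinarith [neg_mul_sin_le_abs k θ, sq_abs k, abs_nonneg k]

theorem one_add_mul_sin_pos {k : ℝ} (hk : |k| < 1) (θ : ℝ) : 0 < 1 + k * sin θ := by
  linarith [neg_mul_sin_le_abs k θ]

theorem continuous_cos_sq_mul_log :
    Continuous (Function.uncurry fun k θ => cos θ ^ 2 * log (1 + k ^ 2 + 2 * k * sin θ)) :=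
  continuous_mul_log_of_le (by fun_prop) (by fun_prop) (fun _ => sq_nonneg _) fun p => by
    rw [one_add_sq_add_two_mul_sin]; exact le_add_of_nonneg_left (sq_nonneg _)

theorem continuous_cos_sq_mul_div {k : ℝ} (hk : |k| < 1) :
    Continuous fun θ => cos θ ^ 2 * (2 * k + 2 * sin θ) / (1 + k ^ 2 + 2 * k * sin θ) :=
  (by fun_prop : Continuous _).div (by fun_prop) fun θ =>
    (one_add_sq_add_two_mul_sin_pos hk θ).ne'

theorem abs_cos_sq_mul_div_le_one (k θ : ℝ) :
    |cos θ ^ 2 * (2 * k + 2 * sin θ) / (1 + k ^ 2 + 2 * k * sin θ)| ≤ 1 := by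
  have hc : cos θ ^ 2 ≤ |cos θ| := by
    rw [← sq_abs]; exact pow_le_of_le_one (abs_nonneg _) (abs_cos_le_one θ) two_ne_zero
  rw [one_add_sq_add_two_mul_sin, abs_div,
    abs_of_nonneg (by positivity : 0 ≤ (k + sin θ) ^ 2 + cos θ ^ 2), abs_mul,
    abs_of_nonneg (sq_nonneg (cos θ)), show 2 * k + 2 * sin θ = 2 * (k + sin θ) by ring,
    abs_mul, abs_two]
  refine div_le_one_of_le₀ ?_ (by positivity)
  nlinarith [two_mul_le_add_sq |k + sin θ| |cos θ|, sq_abs (k + sin θ), sq_abs (cos θ),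
    abs_nonneg (k + sin θ)]

theorem hasDerivAt_arctan_mul_cos_div {k : ℝ} (hk : |k| < 1) (θ : ℝ) :
    HasDerivAt (fun θ => arctan (k * cos θ / (1 + k * sin θ)))
      (-(k * (k + sin θ)) / (1 + k ^ 2 + 2 * k * sin θ)) θ := by
  have hden := one_add_mul_sin_pos hk θ
  have hD := one_add_sq_add_two_mul_sin_pos hk θ
  refine (((hasDerivAt_cos θ).const_mul k).div ((hasDerivAt_sin θ).const_mul k |>.const_add 1)
    hden.ne').arctan.congr_deriv ?_
  simp only [Pi.div_apply]
  set D := 1 + k ^ 2 + 2 * k * sin θ with hD_def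
  field_simp
  rw [hD_def, cos_sq']
  ring

theorem hasDerivAt_primitive_cos_sq_mul_div {k : ℝ} (hk : |k| < 1) (hk0 : k ≠ 0) (θ : ℝ) :
    HasDerivAt (fun θ => k * θ / 2 + sin θ * cos θ / (2 * k) - (1 - k ^ 2) * cos θ / (2 * k ^ 2)
        + (1 - k ^ 2) ^ 2 / (2 * k ^ 3) * arctan (k * cos θ / (1 + k * sin θ)))
      (cos θ ^ 2 * (2 * k + 2 * sin θ) / (1 + k ^ 2 + 2 * k * sin θ)) θ := by
  have hD := one_add_sq_add_two_mul_sin_pos hk θ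
  refine (((((hasDerivAt_id θ).const_mul k).div_const 2).add
    (((hasDerivAt_sin θ).mul (hasDerivAt_cos θ)).div_const (2 * k))).sub
    (((hasDerivAt_cos θ).const_mul (1 - k ^ 2)).div_const (2 * k ^ 2))).add
    ((hasDerivAt_arctan_mul_cos_div hk θ).const_mul ((1 - k ^ 2) ^ 2 / (2 * k ^ 3)))
    |>.congr_deriv ?_
  set D := 1 + k ^ 2 + 2 * k * sin θ with hD_def
  field_simp
  rw [hD_def, cos_sq']
  ring

theorem integral_cos_sq_mul_div {k : ℝ} (hk : |k| < 1) :
    ∫ θ in -(π / 2)..π / 2, cos θ ^ 2 * (2 * k + 2 * sin θ) / (1 + k ^ 2 + 2 * k * sin θ)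
      = π * k / 2 := by
  have hint := (continuous_cos_sq_mul_div hk).intervalIntegrable (μ := volume) (-(π / 2)) (π / 2)
  rcases eq_or_ne k 0 with rfl | hk0
  · have hprim (θ : ℝ) : HasDerivAt (fun θ => -(2 / 3) * cos θ ^ 3)
        (cos θ ^ 2 * (2 * 0 + 2 * sin θ) / (1 + 0 ^ 2 + 2 * 0 * sin θ)) θ :=
      ((hasDerivAt_cos θ).pow 3).const_mul _ |>.congr_deriv (by ring)
    rw [integral_eq_sub_of_hasDerivAt (fun θ _ => hprim θ) hint]
    simp
  · rw [integral_eq_sub_of_hasDerivAt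
      (fun θ _ => hasDerivAt_primitive_cos_sq_mul_div hk hk0 θ) hint]
    simp only [sin_pi_div_two, cos_pi_div_two, sin_neg, cos_neg, mul_zero, zero_div, arctan_zero]
    ring

theorem hasDerivAt_integral_cos_sq_mul_log {k : ℝ} (hk : |k| < 1) :
    HasDerivAt (fun k => ∫ θ in -(π / 2)..π / 2, cos θ ^ 2 * log (1 + k ^ 2 + 2 * k * sin θ))
      (π * k / 2) k := by
  have hcont (x : ℝ) :
      Continuous fun θ => cos θ ^ 2 * log (1 + x ^ 2 + 2 * x * sin θ) :=
    continuous_cos_sq_mul_log.uncurry_left x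
  have hderiv {x : ℝ} (hx : |x| < 1) (θ : ℝ) :
      HasDerivAt (fun x => cos θ ^ 2 * log (1 + x ^ 2 + 2 * x * sin θ))
        (cos θ ^ 2 * (2 * x + 2 * sin θ) / (1 + x ^ 2 + 2 * x * sin θ)) x := by
    have hD : HasDerivAt (fun x => 1 + x ^ 2 + 2 * x * sin θ) (2 * x + 2 * sin θ) x :=
      (((hasDerivAt_pow 2 x).const_add 1).add
        (((hasDerivAt_id x).const_mul 2).mul_const (sin θ))).congr_deriv (by norm_num)
    exact ((hD.log (one_add_sq_add_two_mul_sin_pos hx θ).ne').const_mul _).congr_deriv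
      (mul_div_assoc ..).symm
  rw [← integral_cos_sq_mul_div hk]
  refine (hasDerivAt_integral_of_dominated_loc_of_deriv_le (μ := volume) (s := {x : ℝ | |x| < 1})
    (F := fun x θ => cos θ ^ 2 * log (1 + x ^ 2 + 2 * x * sin θ))
    (F' := fun x θ => cos θ ^ 2 * (2 * x + 2 * sin θ) / (1 + x ^ 2 + 2 * x * sin θ))
    (bound := fun _ => 1) ((isOpen_lt continuous_abs continuous_const).mem_nhds hk)
    ?_ ?_ ?_ ?_ intervalIntegrable_const ?_).2
  · exact Eventually.of_forall fun x => (hcont x).aestronglyMeasurable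
  · exact (hcont k).intervalIntegrable _ _
  · exact (continuous_cos_sq_mul_div hk).aestronglyMeasurable
  · exact ae_of_all _ fun θ _ x _ => abs_cos_sq_mul_div_le_one x θ
  · exact ae_of_all _ fun θ _ x hx => hderiv hx θ

theorem integral_cos_sq_mul_log {k : ℝ} (hk0 : 0 ≤ k) (hk1 : k ≤ 1) :
    ∫ θ in -(π / 2)..π / 2, cos θ ^ 2 * log (1 + k ^ 2 + 2 * k * sin θ) = π * k ^ 2 / 4 := by
  refine eq_of_has_deriv_right_eq (f' := fun k => π * k / 2) (a := 0) (b := 1)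
    (fun x hx => (hasDerivAt_integral_cos_sq_mul_log ?_).hasDerivWithinAt)
    (fun x _ => ((hasDerivAt_pow 2 x).const_mul π |>.div_const 4).hasDerivWithinAt.congr_deriv
      (by ring))
    (continuous_parametric_intervalIntegral_of_continuous' continuous_cos_sq_mul_log _ _
      |>.continuousOn) (by fun_prop) (by simp) k ⟨hk0, hk1⟩
  rw [abs_lt]; constructor <;> linarith [hx.1, hx.2]

theorem neg_log_mul_sqrt_substitution {σ k θ : ℝ} (hσ : 0 < σ) (hk : 0 ≤ k)
    (hθ : θ ∈ Icc (-(π / 2)) (π / 2)) :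
    |2 * σ * k * cos θ| * (-log (σ * (1 + k ^ 2 + 2 * k * sin θ)) *
        √((σ * (1 + k) ^ 2 - σ * (1 + k ^ 2 + 2 * k * sin θ))
          * (σ * (1 + k ^ 2 + 2 * k * sin θ) - σ * (1 - k) ^ 2)))
      = -(4 * σ ^ 2 * k ^ 2) * (log σ * cos θ ^ 2
        + cos θ ^ 2 * log (1 + k ^ 2 + 2 * k * sin θ)) := by
  have hcos : 0 ≤ cos θ := cos_nonneg_of_mem_Icc hθ
  have hsq : (σ * (1 + k) ^ 2 - σ * (1 + k ^ 2 + 2 * k * sin θ))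
      * (σ * (1 + k ^ 2 + 2 * k * sin θ) - σ * (1 - k) ^ 2) = (2 * σ * k * cos θ) ^ 2 := by
    linear_combination (-(4 * σ ^ 2 * k ^ 2)) * sin_sq_add_cos_sq θ
  rw [hsq, sqrt_sq (by positivity), abs_of_nonneg (by positivity)]
  rcases hcos.eq_or_lt with hc | hc
  · simp [← hc]
  · have hD : 0 < 1 + k ^ 2 + 2 * k * sin θ := by
      rw [one_add_sq_add_two_mul_sin]; positivity
    rw [log_mul hσ.ne' hD.ne']
    ring

theorem integral_neg_log_mul_sqrt {σ k : ℝ} (hσ : 0 < σ) (hk0 : 0 < k) (hk1 : k ≤ 1) :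
    ∫ x in σ * (1 - k) ^ 2..σ * (1 + k) ^ 2,
        -log x * √((σ * (1 + k) ^ 2 - x) * (x - σ * (1 - k) ^ 2))
      = -(2 * π * σ ^ 2 * k ^ 2 * log σ) - π * σ ^ 2 * k ^ 4 := by
  set φ : ℝ → ℝ := fun θ => σ * (1 + k ^ 2 + 2 * k * sin θ) with hφ
  have hπ : -(π / 2) ≤ π / 2 := by linarith [pi_pos]
  have hφ' (θ : ℝ) : HasDerivAt φ (2 * σ * k * cos θ) θ :=
    (((hasDerivAt_sin θ).const_mul (2 * k)).const_add (1 + k ^ 2)).const_mul σ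
      |>.congr_deriv (by ring)
  have hmono : StrictMonoOn φ (Icc (-(π / 2)) (π / 2)) := fun a ha b hb hab => by
    have := mul_lt_mul_of_pos_left (strictMonoOn_sin ha hb hab) (by positivity : 0 < 2 * σ * k)
    simp only [hφ]; nlinarith
  have himage : φ '' Icc (-(π / 2)) (π / 2) = Icc (σ * (1 - k) ^ 2) (σ * (1 + k) ^ 2) := by
    rw [ContinuousOn.image_Icc_of_monotoneOn hπ (by fun_prop) hmono.monotoneOn]
    simp only [hφ, sin_neg, sin_pi_div_two]
    congr 1 <;> ring
  rw [integral_of_le (by nlinarith), ← integral_Icc_eq_integral_Ioc, ← himage,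
    integral_image_eq_integral_abs_deriv_smul measurableSet_Icc
      (fun θ _ => (hφ' θ).hasDerivWithinAt) hmono.injOn]
  simp only [hφ, smul_eq_mul]
  rw [setIntegral_congr_fun measurableSet_Icc
      fun θ hθ => neg_log_mul_sqrt_substitution hσ hk0.le hθ,
    integral_Icc_eq_integral_Ioc, ← integral_of_le hπ, intervalIntegral.integral_const_mul,
    intervalIntegral.integral_add, intervalIntegral.integral_const_mul, integral_cos_sq,
    integral_cos_sq_mul_log hk0.le hk1]
  · simp only [cos_pi_div_two, sin_pi_div_two, cos_neg, sin_neg]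
    ring
  · exact (continuous_const.mul (by fun_prop)).intervalIntegrable _ _
  · exact (continuous_cos_sq_mul_log.uncurry_left k).intervalIntegrable _ _

theorem stmt10_general (α β l0 sg2 lm lp : ℝ) (hα : 1 ≤ α) (hαβ : α ≤ β)
    (hl0' : l0 < 1)
    (hsg2 : sg2 = (1 - l0) / α)
    (hlm : lm = sg2 * (1 - Real.sqrt (α / β)) ^ 2)
    (hlp : lp = sg2 * (1 + Real.sqrt (α / β)) ^ 2) :
    (α / (2 * Real.pi * sg2 * (α / β)) *
        ∫ x in lm..lp, (-Real.log x) * Real.sqrt ((lp - x) * (x - lm)))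
      - l0 * Real.log l0 =
    1 / (4 * α * β) *
      (-4 * α * β * l0 * Real.log l0
        + (8 * α * β * Real.log 2 - α ^ 2 - β ^ 2) * (1 - l0)
        - 4 * α * β * (1 - l0) *
            Real.log (-2 * ((α + β) * l0 - (β - α) * (1 - l0) - α - β) / (α * β))
        + (α + β) * (β - α) * (1 - l0)) := by
  have hα0 : 0 < α := by linarith
  have hβ0 : 0 < β := by linarith
  have hσ : 0 < sg2 := hsg2 ▸ div_pos (by linarith) hα0
  have hk2 : √(α / β) ^ 2 = α / β := sq_sqrt (by positivity)
  have hk0 : 0 < √(α / β) := sqrt_pos.2 (by positivity)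
  have hk1 : √(α / β) ≤ 1 := sqrt_le_one.2 ((div_le_one hβ0).2 hαβ)
  have hlog : log (-2 * ((α + β) * l0 - (β - α) * (1 - l0) - α - β) / (α * β))
      = 2 * log 2 + log sg2 := by
    rw [show -2 * ((α + β) * l0 - (β - α) * (1 - l0) - α - β) / (α * β) = 2 ^ 2 * sg2 by
      rw [hsg2]; field_simp; ring, log_mul (by norm_num) hσ.ne', log_pow]
    push_cast; ring
  subst hlm hlp
  rw [integral_neg_log_mul_sqrt hσ hk0 hk1, hlog, show √(α / β) ^ 4 = (√(α / β) ^ 2) ^ 2 by ring,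
    hk2]
  subst hsg2
  field_simp
  ring

theorem stmt10 (α β l0 sg2 lm lp : ℝ) (hα : 1 ≤ α) (hαβ : α ≤ β)
    (hl0 : 0 ≤ l0) (hl0' : l0 < 1)
    (hsg2 : sg2 = (1 - l0) / α)
    (hlm : lm = sg2 * (1 - Real.sqrt (α / β)) ^ 2)
    (hlp : lp = sg2 * (1 + Real.sqrt (α / β)) ^ 2) :
    (α / (2 * Real.pi * sg2 * (α / β)) *
        ∫ x in lm..lp, (-Real.log x) * Real.sqrt ((lp - x) * (x - lm)))
      - l0 * Real.log l0 =
    1 / (4 * α * β) *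
      (-4 * α * β * l0 * Real.log l0
        + (8 * α * β * Real.log 2 - α ^ 2 - β ^ 2) * (1 - l0)
        - 4 * α * β * (1 - l0) *
            Real.log (-2 * ((α + β) * l0 - (β - α) * (1 - l0) - α - β) / (α * β))
        + (α + β) * (β - α) * (1 - l0)) :=
  stmt10_general α β l0 sg2 lm lp hα hαβ hl0' hsg2 hlm hlp
end

section
/- For reals α ≥ 2 and λ₀ ∈ [0,1], with σ_γ² = (1−λ₀)/α, the degree-2 Rényi entropy formula holds: −ln( (α/(2πσ_γ²)) ∫_0^{4σ_γ²} x√((4σ_γ² − x)x) dx + λ₀² ) = −ln( (λ₀²(α+2) − 4λ₀ + 2)/α ). -/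
/-!
The substitution `x = R/2 · (1 + u)` turns `∫₀^R x √((R - x) x) dx` into
`(R/2)³ ∫₋₁¹ (1 + u) √(1 - u²) du`; the odd part vanishes and the even part is the area `π/2`
of the unit half-disc, so the integral is `π R³ / 16`. With `R = 4σ²` the integral term of the
entropy becomes `2 α σ⁴ = 2 (1 - λ₀)² / α`, and adding `λ₀²` gives the closed form.
-/

open Real intervalIntegral

theorem intervalIntegral.integral_eq_zero_of_odd {E : Type*} [NormedAddCommGroup E]
    [NormedSpace ℝ E] {f : ℝ → E} (hf : ∀ x, f (-x) = -f x) (a : ℝ) :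
    ∫ x in -a..a, f x = 0 := by
  have h := integral_comp_neg (a := -a) (b := a) f
  simp only [hf, integral_neg, neg_neg] at h
  have h2 : (2 : ℝ) • ∫ x in -a..a, f x = 0 := by
    rw [two_smul]; nth_rewrite 1 [← h]; exact neg_add_cancel _
  exact (smul_eq_zero.mp h2).resolve_left two_ne_zero

theorem integral_mul_sqrt_one_sub_sq : ∫ u in (-1:ℝ)..1, u * √(1 - u ^ 2) = 0 :=
  integral_eq_zero_of_odd (fun u => by rw [neg_sq, neg_mul]) 1

theorem integral_mul_sqrt_sub_mul {R : ℝ} (hR : 0 ≤ R) :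
    ∫ x in (0:ℝ)..R, x * √((R - x) * x) = π * R ^ 3 / 16 := by
  have hsubst := smul_integral_comp_mul_add (a := -1) (b := 1)
    (fun x => x * √((R - x) * x)) (R / 2) (R / 2)
  have hcollapse : ∀ u : ℝ,
      (R / 2 * u + R / 2) * √((R - (R / 2 * u + R / 2)) * (R / 2 * u + R / 2))
        = (R / 2) ^ 2 * (u * √(1 - u ^ 2) + √(1 - u ^ 2)) := by
    intro u
    rw [show (R - (R / 2 * u + R / 2)) * (R / 2 * u + R / 2) = (R / 2) ^ 2 * (1 - u ^ 2) by ring,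
      sqrt_mul (sq_nonneg _), sqrt_sq (by positivity)]
    ring
  have hodd : IntervalIntegrable (fun u : ℝ => u * √(1 - u ^ 2)) MeasureTheory.volume (-1) 1 :=
    (by fun_prop : Continuous fun u : ℝ => u * √(1 - u ^ 2)).intervalIntegrable _ _
  have heven : IntervalIntegrable (fun u : ℝ => √(1 - u ^ 2)) MeasureTheory.volume (-1) 1 :=
    (by fun_prop : Continuous fun u : ℝ => √(1 - u ^ 2)).intervalIntegrable _ _
  simp only [hcollapse, smul_eq_mul, integral_const_mul] at hsubst
  rw [integral_add hodd heven, integral_mul_sqrt_one_sub_sq, integral_sqrt_one_sub_sq,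
    show R / 2 * -1 + R / 2 = 0 by ring, show R / 2 * 1 + R / 2 = R by ring] at hsubst
  rw [← hsubst]
  ring

theorem stmt15_general (α l0 sg2 : ℝ) (hα : 2 ≤ α) (hl0' : l0 ≤ 1)
    (hsg2 : sg2 = (1 - l0) / α) :
    -Real.log (α / (2 * Real.pi * sg2) *
        (∫ x in (0:ℝ)..(4 * sg2), x * Real.sqrt ((4 * sg2 - x) * x)) + l0 ^ 2) =
    -Real.log ((l0 ^ 2 * (α + 2) - 4 * l0 + 2) / α) := by
  have hα0 : 0 < α := by linarith
  have hsg2_nonneg : 0 ≤ sg2 := hsg2 ▸ div_nonneg (by linarith) hα0.le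
  -- at `sg2 = 0` both sides vanish, the left one through `x / 0 = 0`
  have hbulk : α / (2 * π * sg2) * (∫ x in (0:ℝ)..(4 * sg2), x * √((4 * sg2 - x) * x))
      = 2 * α * sg2 ^ 2 := by
    rw [integral_mul_sqrt_sub_mul (by positivity)]
    rcases hsg2_nonneg.eq_or_lt with rfl | hpos
    · simp
    · field_simp
      ring
  rw [hbulk, hsg2]
  congr 2
  field_simp
  ring

theorem stmt15 (α l0 sg2 : ℝ) (hα : 2 ≤ α) (hl0 : 0 ≤ l0) (hl0' : l0 ≤ 1)
    (hsg2 : sg2 = (1 - l0) / α) :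
    -Real.log (α / (2 * Real.pi * sg2) *
        (∫ x in (0:ℝ)..(4 * sg2), x * Real.sqrt ((4 * sg2 - x) * x)) + l0 ^ 2) =
    -Real.log ((l0 ^ 2 * (α + 2) - 4 * l0 + 2) / α) :=
  stmt15_general α l0 sg2 hα hl0' hsg2
end
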